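/- arXiv:1701.00131 — 4 statements merged into one kernel-verified Lean document; each statement's English description precedes it below -/
import Mathlib

section
/- Let C be a compact subset of ℝ² and let D be a closed disc whose center lies in C. Then diam(C ∪ D) ≤ max( diam(C) + √(2·(area(C∪D) − area(C))/π), √(4·area(C∪D)/π) ), where area denotes 2-dimensional Lebesgue measure and diam the Euclidean diameter. -/
/-!
If `x ∈ C` and `y ∈ D` are at distance `diam C + t` with `t > 0`, put `u` the unit vector from
`x` to `y` and `c = v + (r - t) u`. The open half-disc of radius `t` around `c` on the `u`-side
lies in `D` (as `|c - v| = r - t`), and misses `C`: each of its points `z` has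
`⟪z - x, u⟫ > diam C`. Hence `area(C ∪ D) - area(C) ≥ π t² / 2`. Two points of `D` are at
distance at most `2r`, and `π r² ≤ area(C ∪ D)`.
-/

open MeasureTheory Metric Real Set
open scoped RealInnerProductSpace

section HalfBall

variable {F : Type*} [NormedAddCommGroup F] [InnerProductSpace ℝ F]

def halfBall (c : F) (t : ℝ) (u : F) : Set F := ball c t ∩ {z | 0 < ⟪z - c, u⟫}

theorem isOpen_halfBall (c : F) (t : ℝ) (u : F) : IsOpen (halfBall c t u) :=
  isOpen_ball.inter (isOpen_lt continuous_const (by fun_prop))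

theorem measure_halfBall [FiniteDimensional ℝ F] [MeasurableSpace F] [BorelSpace F]
    (μ : Measure F) [μ.IsAddHaarMeasure] (c : F) (t : ℝ) {u : F} (hu : u ≠ 0) :
    μ (halfBall c t u) = μ (ball c t) / 2 := by
  set H := {z : F | ⟪z - c, u⟫ = 0}
  set opposite := ball c t ∩ {z | ⟪z - c, u⟫ < 0}
  have hH : μ H = 0 := by
    have hK : (ℝ ∙ u)ᗮ ≠ ⊤ := by
      rwa [Ne, Submodule.orthogonal_eq_top_iff, Submodule.span_singleton_eq_bot]
    have : H = (· + -c) ⁻¹' (ℝ ∙ u)ᗮ := by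
      ext z
      simp [H, Submodule.mem_orthogonal_singleton_iff_inner_right, real_inner_comm,
        ← sub_eq_add_neg]
    rw [this, measure_preimage_add_right]
    exact Measure.addHaar_submodule μ _ hK
  -- the point reflection through `c` swaps the two halves
  have hreflect : μ opposite = μ (halfBall c t u) := by
    have : (fun z => c + c - z) ⁻¹' halfBall c t u = opposite := by
      ext z
      have hzc : c + c - z - c = -(z - c) := by abel
      simp only [halfBall, opposite, mem_preimage, mem_inter_iff, mem_ball, mem_ofPred_eq,
        dist_eq_norm, hzc, norm_neg, inner_neg_left, neg_pos]
    rw [← this]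
    exact (Measure.measurePreserving_sub_left μ (c + c)).measure_preimage
      (isOpen_halfBall c t u).measurableSet.nullMeasurableSet
  have hsplit : ball c t \ H = halfBall c t u ∪ opposite := by
    ext z
    simp only [halfBall, opposite, H, mem_sdiff, mem_union, mem_inter_iff, mem_ofPred_eq]
    constructor
    · rintro ⟨hz, hne⟩
      rcases lt_or_gt_of_ne hne with h | h
      · exact Or.inr ⟨hz, h⟩
      · exact Or.inl ⟨hz, h⟩
    · rintro (⟨hz, h⟩ | ⟨hz, h⟩)
      exacts [⟨hz, h.ne'⟩, ⟨hz, h.ne⟩]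
  have hdisj : Disjoint (halfBall c t u) opposite :=
    disjoint_left.2 fun _ h₁ h₂ => lt_asymm h₂.2 (show (0 : ℝ) < _ from h₁.2)
  have hopp : MeasurableSet opposite :=
    (isOpen_ball.inter (isOpen_lt (by fun_prop) continuous_const)).measurableSet
  rw [ENNReal.eq_div_iff two_ne_zero ENNReal.ofNat_ne_top, two_mul,
    ← measure_sdiff_null (s := ball c t) hH, hsplit, measure_union hdisj hopp, hreflect]

theorem exists_halfBall_subset_closedBall_diff {C : Set F} (hC : Bornology.IsBounded C)
    {a b v : F} {r t : ℝ} (ha : a ∈ C) (hv : v ∈ C) (hb : b ∈ closedBall v r) (ht : 0 < t)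
    (hab : diam C + t ≤ dist a b) :
    ∃ c u, u ≠ 0 ∧ halfBall c t u ⊆ closedBall v r \ C := by
  have hdiam : dist a v ≤ diam C := dist_le_diam_of_mem hC ha hv
  have hbv : dist b v ≤ r := hb
  have hba : b - a ≠ 0 := sub_ne_zero.2 fun h => by
    rw [h, dist_self] at hab; linarith [diam_nonneg (s := C)]
  set u : F := ‖b - a‖⁻¹ • (b - a)
  have hu : ‖u‖ = 1 := norm_smul_inv_norm hba
  have htr : t ≤ r := by linarith [dist_triangle a v b, dist_comm v b]
  refine ⟨v + (r - t) • u, u, fun h => by simp [h] at hu, ?_⟩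
  rintro z ⟨hz, hzu⟩
  rw [mem_ofPred_eq] at hzu
  refine ⟨?_, fun hzC => ?_⟩
  · refine closedBall_subset_closedBall' ?_ (ball_subset_closedBall hz)
    rw [dist_self_add_left, norm_smul, hu, mul_one, Real.norm_of_nonneg (by linarith)]
    linarith
  have hinner : ⟪z - a, u⟫ =
      ⟪z - (v + (r - t) • u), u⟫ + (r - t) + dist a b - ⟪b - v, u⟫ := by
    have hbau : ⟪b - a, u⟫ = dist a b := by
      rw [real_inner_smul_right, real_inner_self_eq_norm_sq, dist_comm, dist_eq_norm]
      field_simp [norm_ne_zero_iff.2 hba]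
    have huu : ⟪(r - t) • u, u⟫ = r - t := by
      rw [real_inner_smul_left, real_inner_self_eq_norm_sq, hu, one_pow, mul_one]
    rw [show z - a = z - (v + (r - t) • u) + (r - t) • u + (b - a) - (b - v) by abel,
      inner_sub_left, inner_add_left, inner_add_left, huu, hbau]
  have hbvu : ⟪b - v, u⟫ ≤ r :=
    (real_inner_le_norm _ _).trans (by rw [hu, mul_one, ← dist_eq_norm]; exact hbv)
  have hzau : ⟪z - a, u⟫ ≤ diam C := (real_inner_le_norm _ _).trans <| by
    rw [hu, mul_one, ← dist_eq_norm, dist_comm]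
    exact dist_le_diam_of_mem hC ha hzC
  linarith

end HalfBall

local notation "ℝ²" => EuclideanSpace ℝ (Fin 2)

theorem measureReal_halfBall (c : ℝ²) {t : ℝ} (ht : 0 ≤ t) {u : ℝ²} (hu : u ≠ 0) :
    volume.real (halfBall c t u) = π * t ^ 2 / 2 := by
  rw [measureReal_def, measure_halfBall volume c t hu, EuclideanSpace.volume_ball_fin_two,
    ENNReal.toReal_div, ENNReal.toReal_mul, ENNReal.toReal_pow, ENNReal.toReal_ofReal ht,
    ENNReal.toReal_ofReal pi_nonneg]
  norm_num
  ring

theorem dist_le_diam_add_sqrt {C : Set ℝ²} (hC : Bornology.IsBounded C) {a b v : ℝ²} {r : ℝ}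
    (ha : a ∈ C) (hv : v ∈ C) (hb : b ∈ closedBall v r) :
    dist a b ≤
      diam C + √(2 * (volume.real (C ∪ closedBall v r) - volume.real C) / π) := by
  set t := dist a b - diam C
  rcases le_or_gt t 0 with ht | ht
  · linarith [sqrt_nonneg (2 * (volume.real (C ∪ closedBall v r) - volume.real C) / π)]
  obtain ⟨c, u, hu, hsub⟩ :=
    exists_halfBall_subset_closedBall_diff hC ha hv hb ht (by linarith)
  have hfin : volume (halfBall c t u) ≠ ⊤ :=
    ((measure_mono inter_subset_left).trans_lt measure_ball_lt_top).ne
  have hgain : volume.real C + π * t ^ 2 / 2 ≤ volume.real (C ∪ closedBall v r) := by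
    rw [← measureReal_halfBall c ht.le hu, ← measureReal_union
      (disjoint_sdiff_right.mono_right hsub) (isOpen_halfBall c t u).measurableSet
      hC.measure_lt_top.ne hfin]
    exact measureReal_mono (union_subset_union_right C (hsub.trans sdiff_subset))
      (hC.union isBounded_closedBall).measure_lt_top.ne
  have : t ≤ √(2 * (volume.real (C ∪ closedBall v r) - volume.real C) / π) := by
    rw [le_sqrt' ht, le_div_iff₀ pi_pos]
    linarith
  linarith

theorem dist_le_sqrt_of_closedBall_subset {s : Set ℝ²} (hs : volume s ≠ ⊤) {x y v : ℝ²} {r : ℝ}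
    (hx : x ∈ closedBall v r) (hy : y ∈ closedBall v r) (hsub : closedBall v r ⊆ s) :
    dist x y ≤ √(4 * volume.real s / π) := by
  have hr : 0 ≤ r := dist_nonneg.trans hx
  have hball : π * r ^ 2 ≤ volume.real s := by
    have := measureReal_mono hsub hs
    rwa [measureReal_def, EuclideanSpace.volume_closedBall_fin_two, ENNReal.toReal_mul,
      ENNReal.toReal_pow, ENNReal.toReal_ofReal hr, ENNReal.toReal_ofReal pi_nonneg,
      mul_comm] at this
  calc dist x y ≤ 2 * r :=
        (dist_le_diam_of_mem isBounded_closedBall hx hy).trans (diam_closedBall hr)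
    _ ≤ √(4 * volume.real s / π) := by
      rw [le_sqrt (by positivity) (by positivity), le_div_iff₀ pi_pos]
      linarith

theorem stmt_0_general (C : Set (EuclideanSpace ℝ (Fin 2))) (hC : IsCompact C)
    (v : EuclideanSpace ℝ (Fin 2)) (r : ℝ) (hv : v ∈ C) :
    Metric.diam (C ∪ Metric.closedBall v r) ≤
      max (Metric.diam C +
          Real.sqrt (2 * ((volume (C ∪ Metric.closedBall v r)).toReal - (volume C).toReal)
            / Real.pi))
        (Real.sqrt (4 * (volume (C ∪ Metric.closedBall v r)).toReal / Real.pi)) := by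
  simp only [← measureReal_def]
  refine diam_le_of_forall_dist_le (le_max_of_le_left (by positivity)) ?_
  rintro x (hx | hx) y (hy | hy)
  · exact le_max_of_le_left ((dist_le_diam_of_mem hC.isBounded hx hy).trans
      (le_add_of_nonneg_right (sqrt_nonneg _)))
  · exact le_max_of_le_left (dist_le_diam_add_sqrt hC.isBounded hx hv hy)
  · rw [dist_comm]
    exact le_max_of_le_left (dist_le_diam_add_sqrt hC.isBounded hy hv hx)
  · exact le_max_of_le_right (dist_le_sqrt_of_closedBall_subset
      (hC.isBounded.union isBounded_closedBall).measure_lt_top.ne hx hy subset_union_right)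

theorem stmt_0 (C : Set (EuclideanSpace ℝ (Fin 2))) (hC : IsCompact C)
    (v : EuclideanSpace ℝ (Fin 2)) (r : ℝ) (hr : 0 ≤ r) (hv : v ∈ C) :
    Metric.diam (C ∪ Metric.closedBall v r) ≤
      max (Metric.diam C +
          Real.sqrt (2 * ((volume (C ∪ Metric.closedBall v r)).toReal - (volume C).toReal)
            / Real.pi))
        (Real.sqrt (4 * (volume (C ∪ Metric.closedBall v r)).toReal / Real.pi)) :=
  stmt_0_general C hC v r hv
end

section
/- Let C be a compact convex subset of ℝ² and D a closed disc whose center lies in C. Then sup_{z ∈ C, z' ∈ D} ‖z − z'‖ − diam(C) ≤ √(2·(area(C∪D) − area(C))/π). -/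
/-!
Let `s = dist z z' - diam C > 0` and let `e` be a unit vector with `v - z = ‖v - z‖ • e`. The
half of the ball of radius `s` around `z + (diam C) • e` lying beyond the supporting hyperplane
of a norming functional of `e` is contained in `D`, because its centre is at distance
`diam C - ‖v - z‖` from `v` and `dist z z' ≤ ‖v - z‖ + r`; and it misses `C`, because each of
its points is farther than `diam C` from `z`. Its area is `π s² / 2`.
-/

open MeasureTheory Metric

section HalfBall

variable {E : Type*} [NormedAddCommGroup E] [NormedSpace ℝ E] [FiniteDimensional ℝ E]
  [MeasurableSpace E] [BorelSpace E] (μ : Measure E) [μ.IsAddHaarMeasure]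

theorem addHaar_setOf_map_sub_eq_zero {f : StrongDual ℝ E} (hf : f ≠ 0) (c : E) :
    μ {w | f (w - c) = 0} = 0 := by
  have hker : {w | f (w - c) = 0} = (· + -c) ⁻¹' (LinearMap.ker (f : E →ₗ[ℝ] ℝ) : Set E) := by
    ext w
    simp [sub_eq_add_neg]
  rw [hker, measure_preimage_add_right]
  refine Measure.addHaar_submodule μ _ fun htop => hf (ContinuousLinearMap.coe_injective ?_)
  simpa using LinearMap.ker_eq_top.mp htop

theorem addHaar_ball_inter_setOf_map_sub_neg (f : StrongDual ℝ E) (c : E) (s : ℝ) :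
    μ (ball c s ∩ {w | f (w - c) < 0}) = μ (ball c s ∩ {w | 0 < f (w - c)}) := by
  have hrefl : MeasurePreserving (fun w => c + -(w - c)) μ μ :=
    (measurePreserving_add_left μ c).comp
      ((Measure.measurePreserving_neg μ).comp (measurePreserving_sub_right μ c))
  rw [← hrefl.measure_preimage
    (measurableSet_ball.inter (measurableSet_lt measurable_const (by fun_prop))).nullMeasurableSet]
  congr 1
  ext w
  simp [dist_eq_norm, ← norm_neg (w - c)]

theorem two_mul_addHaar_ball_inter_setOf_map_sub_pos {f : StrongDual ℝ E} (hf : f ≠ 0) (c : E)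
    (s : ℝ) : 2 * μ (ball c s ∩ {w | 0 < f (w - c)}) = μ (ball c s) := by
  have hsplit : ball c s ∩ {w | 0 < f (w - c)} ∪ ball c s ∩ {w | f (w - c) < 0} =
      ball c s \ {w | f (w - c) = 0} := by
    ext w
    simp only [Set.mem_sdiff, Set.mem_union, Set.mem_inter_iff, Set.mem_ofPred_eq, ← ne_eq,
      ne_iff_lt_or_gt, ← and_or_left]
    tauto
  calc 2 * μ (ball c s ∩ {w | 0 < f (w - c)})
      = μ (ball c s ∩ {w | 0 < f (w - c)}) + μ (ball c s ∩ {w | f (w - c) < 0}) := by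
        rw [addHaar_ball_inter_setOf_map_sub_neg, two_mul]
    _ = μ (ball c s \ {w | f (w - c) = 0}) := by
        rw [← hsplit, measure_union
          (Set.disjoint_left.mpr fun _ hpos hneg => lt_asymm hpos.2 hneg.2)
          (measurableSet_ball.inter (measurableSet_lt (by fun_prop) measurable_const))]
    _ = μ (ball c s) :=
        measure_sdiff_null' (measure_mono_null Set.inter_subset_right
          (addHaar_setOf_map_sub_eq_zero μ hf c))

end HalfBall

section FarHalfBall

variable {E : Type*} [NormedAddCommGroup E] [NormedSpace ℝ E] [Nontrivial E]

theorem exists_norm_eq_one_and_eq_norm_smul (x : E) : ∃ e : E, ‖e‖ = 1 ∧ x = ‖x‖ • e := by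
  rcases eq_or_ne x 0 with rfl | hx
  · obtain ⟨e, he⟩ := exists_norm_eq E zero_le_one
    exact ⟨e, he, by simp⟩
  · refine ⟨‖x‖⁻¹ • x, norm_smul_inv_norm hx, ?_⟩
    rw [smul_smul, mul_inv_cancel₀ (norm_ne_zero_iff.mpr hx), one_smul]

theorem exists_ball_inter_halfspace_subset_closedBall_diff {C : Set E}
    (hC : Bornology.IsBounded C) {z v z' : E} {r : ℝ} (hz : z ∈ C) (hv : v ∈ C)
    (hz' : z' ∈ closedBall v r) :
    ∃ (c : E) (f : StrongDual ℝ E), f ≠ 0 ∧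
      ball c (dist z z' - diam C) ∩ {w | 0 < f (w - c)} ⊆ closedBall v r \ C := by
  obtain ⟨e, he, hve⟩ := exists_norm_eq_one_and_eq_norm_smul (v - z)
  obtain ⟨f, hf, hfe⟩ := exists_dual_vector ℝ e (by simp [he])
  replace hfe : f e = 1 := by simpa [he] using hfe
  rw [← dist_eq_norm] at hve
  set d := dist v z
  set R := diam C
  have hdR : d ≤ R := dist_le_diam_of_mem hC hv hz
  have hzz' : dist z z' ≤ d + r := by
    linarith [dist_triangle_left z z' v, mem_closedBall'.mp hz']
  refine ⟨z + R • e, f, fun h => by simp [h] at hfe, fun w ⟨hw, hfw⟩ => ⟨?_, fun hwC => ?_⟩⟩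
  · have hcv : dist (z + R • e) v = R - d := by
      rw [dist_eq_norm, show z + R • e - v = (R - d) • e by rw [← sub_add_cancel v z, hve]; module,
        norm_smul, he, mul_one, Real.norm_of_nonneg (sub_nonneg.mpr hdR)]
    refine closedBall_subset_closedBall' ?_ (ball_subset_closedBall hw)
    linarith
  · have hRf : R < f (w - z) := by
      have : f (w - z) = f (w - (z + R • e)) + R := by
        rw [show w - z = w - (z + R • e) + R • e by abel, map_add, map_smul, hfe,
          smul_eq_mul, mul_one]
      rw [Set.mem_ofPred_eq] at hfw
      linarith
    have hfle : f (w - z) ≤ ‖w - z‖ :=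
      (le_abs_self _).trans (by simpa [hf] using f.le_opNorm (w - z))
    have hwz : ‖w - z‖ ≤ R := by simpa [dist_eq_norm] using dist_le_diam_of_mem hC hwC hz
    linarith

end FarHalfBall

theorem addHaar_ball_le_two_mul_addHaar_closedBall_diff {E : Type*} [NormedAddCommGroup E]
    [NormedSpace ℝ E] [Nontrivial E] [FiniteDimensional ℝ E] [MeasurableSpace E] [BorelSpace E]
    (μ : Measure E) [μ.IsAddHaarMeasure] {C : Set E} (hC : Bornology.IsBounded C) {z v z' : E}
    {r : ℝ} (hz : z ∈ C) (hv : v ∈ C) (hz' : z' ∈ closedBall v r) (x : E) :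
    μ (ball x (dist z z' - diam C)) ≤ 2 * μ (closedBall v r \ C) := by
  obtain ⟨c, f, hf, hsub⟩ := exists_ball_inter_halfspace_subset_closedBall_diff hC hz hv hz'
  calc μ (ball x (dist z z' - diam C)) = μ (ball c (dist z z' - diam C)) := by
        rw [Measure.addHaar_ball_center, Measure.addHaar_ball_center μ c]
    _ = 2 * μ (ball c (dist z z' - diam C) ∩ {w | 0 < f (w - c)}) :=
        (two_mul_addHaar_ball_inter_setOf_map_sub_pos μ hf c _).symm
    _ ≤ 2 * μ (closedBall v r \ C) := by gcongr

theorem stmt_1_general (C : Set (EuclideanSpace ℝ (Fin 2))) (hC : IsCompact C)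
    (v : EuclideanSpace ℝ (Fin 2)) (r : ℝ) (hv : v ∈ C)
    (z z' : EuclideanSpace ℝ (Fin 2)) (hz : z ∈ C) (hz' : z' ∈ Metric.closedBall v r) :
    dist z z' - Metric.diam C ≤
      Real.sqrt (2 * ((volume (C ∪ Metric.closedBall v r)).toReal - (volume C).toReal)
        / Real.pi) := by
  set s := dist z z' - diam C with hs_def
  set D := closedBall v r
  rcases le_or_gt s 0 with hs | hs
  · exact hs.trans (Real.sqrt_nonneg _)
  have hDC : volume (D \ C) ≠ ⊤ :=
    ((measure_mono Set.sdiff_subset).trans_lt (isCompact_closedBall v r).measure_lt_top).ne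
  have hgain : (volume (C ∪ D)).toReal - (volume C).toReal = (volume (D \ C)).toReal := by
    rw [← Set.union_sdiff_self, measure_union Set.disjoint_sdiff_right
      (measurableSet_closedBall.diff hC.isClosed.measurableSet),
      ENNReal.toReal_add hC.measure_lt_top.ne hDC, add_sub_cancel_left]
  have hball : Real.pi * s ^ 2 ≤ 2 * (volume (D \ C)).toReal := by
    have := ENNReal.toReal_mono (by finiteness) <|
      addHaar_ball_le_two_mul_addHaar_closedBall_diff volume hC.isBounded hz hv hz' v
    simpa [EuclideanSpace.volume_ball_fin_two, ← hs_def, hs.le, Real.pi_pos.le, mul_comm]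
      using this
  rw [hgain, Real.le_sqrt hs.le (by positivity), le_div_iff₀ Real.pi_pos]
  linarith

/-- For `C` compact convex and `D = closedBall v r` with center in `C`:
every distance between a point of `C` and a point of `D`, minus `diam C`,
is at most `√(2·(area(C∪D) − area(C))/π)`. -/
theorem stmt_1 (C : Set (EuclideanSpace ℝ (Fin 2))) (hC : IsCompact C) (hconv : Convex ℝ C)
    (v : EuclideanSpace ℝ (Fin 2)) (r : ℝ) (hr : 0 ≤ r) (hv : v ∈ C)
    (z z' : EuclideanSpace ℝ (Fin 2)) (hz : z ∈ C) (hz' : z' ∈ Metric.closedBall v r) :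
    dist z z' - Metric.diam C ≤
      Real.sqrt (2 * ((volume (C ∪ Metric.closedBall v r)).toReal - (volume C).toReal)
        / Real.pi) :=
  stmt_1_general C hC v r hv z z' hz hz'
end

section
/- Let (Fₙ)ₙ≥0 be a filtration and S ≥ 1 a stopping time for (Fₙ). For any 0 < p₀ < 1 and integers m ≥ 1, n ≥ 1, P(S > n) ≤ (1 − p₀)^m + P(L(n,p₀) < m and S > n), where L(n,p₀) = #{ i : 1 ≤ i ≤ n, P(S = i | F_{i−1}) ≥ p₀ }. -/
/-!
Write `qᵢ = P(S = i | ℱ (i - 1))` and `L k = #{i ∈ [1, k] | p₀ ≤ qᵢ}`. The process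
`M k = (1 - p₀) ^ (-L k) * 1{k < S}` is a supermartingale: given `ℱ k`, on `{k < S}` the
indicator survives to `k + 1` with probability `1 - q (k + 1)`, and the weight is multiplied by
`(1 - p₀)⁻¹` only when `q (k + 1) ≥ p₀`, that is when this probability is at most `1 - p₀`.
Hence `E (M n) ≤ E (M 0) ≤ 1`, and since `M n ≥ (1 - p₀) ^ (-m)` on `{m ≤ L n, n < S}`,
Markov's inequality bounds the probability of that event by `(1 - p₀) ^ m`.
-/

open MeasureTheory

section HazardCount

variable {Ω : Type*} {m0 : MeasurableSpace Ω} (μ : Measure Ω) (ℱ : Filtration ℕ m0) (S : Ω → ℕ)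
  (p₀ : ℝ)

noncomputable def condHazard (i : ℕ) : Ω → ℝ :=
  μ[Set.indicator {ω' | S ω' = i} (fun _ => (1 : ℝ)) | ℱ (i - 1)]

noncomputable def hazardCount (k : ℕ) (ω : Ω) : ℕ :=
  ((Finset.Icc 1 k).filter (fun i => p₀ ≤ condHazard μ ℱ S i ω)).card

noncomputable def hazardWeight (k : ℕ) (ω : Ω) : ℝ :=
  (1 - p₀)⁻¹ ^ hazardCount μ ℱ S p₀ k ω

noncomputable def weightedSurvival (k : ℕ) : Ω → ℝ :=
  {ω | k < S ω}.indicator (hazardWeight μ ℱ S p₀ k)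

lemma hazardCount_succ (k : ℕ) (ω : Ω) :
    hazardCount μ ℱ S p₀ (k + 1) ω =
      hazardCount μ ℱ S p₀ k ω + if p₀ ≤ condHazard μ ℱ S (k + 1) ω then 1 else 0 := by
  simp only [hazardCount, Finset.card_filter]
  exact Finset.sum_Icc_succ_top (by omega) _

lemma hazardCount_le (k : ℕ) (ω : Ω) : hazardCount μ ℱ S p₀ k ω ≤ k :=
  (Finset.card_filter_le _ _).trans (by simp)

lemma measurable_hazardCount {j k : ℕ} (hjk : j ≤ k + 1) :
    Measurable[ℱ k] (hazardCount μ ℱ S p₀ j) := by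
  have hsum : hazardCount μ ℱ S p₀ j = fun ω =>
      ∑ i ∈ Finset.Icc 1 j, if p₀ ≤ condHazard μ ℱ S i ω then 1 else 0 := by
    funext ω; exact Finset.card_filter _ _
  rw [hsum]
  refine Finset.measurable_sum _ fun i hi => Measurable.ite ?_ measurable_const measurable_const
  have hle : i - 1 ≤ k := by simp only [Finset.mem_Icc] at hi; omega
  exact measurableSet_le measurable_const
    ((stronglyMeasurable_condExp.mono (ℱ.mono hle)).measurable)

lemma hazardWeight_succ (k : ℕ) (ω : Ω) :
    hazardWeight μ ℱ S p₀ (k + 1) ω = hazardWeight μ ℱ S p₀ k ω *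
      if p₀ ≤ condHazard μ ℱ S (k + 1) ω then (1 - p₀)⁻¹ else 1 := by
  simp only [hazardWeight, hazardCount_succ]
  split_ifs <;> simp [pow_succ]

lemma measurable_hazardWeight {j k : ℕ} (hjk : j ≤ k + 1) :
    Measurable[ℱ k] (hazardWeight μ ℱ S p₀ j) :=
  (measurable_from_top (f := fun i : ℕ => (1 - p₀)⁻¹ ^ i)).comp
    (measurable_hazardCount μ ℱ S p₀ hjk)

variable {p₀}

lemma hazardWeight_nonneg (hp₁ : p₀ < 1) (k : ℕ) (ω : Ω) : 0 ≤ hazardWeight μ ℱ S p₀ k ω :=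
  pow_nonneg (inv_nonneg.2 (by linarith)) _

lemma one_le_inv_one_sub (hp₀ : 0 ≤ p₀) (hp₁ : p₀ < 1) : 1 ≤ (1 - p₀)⁻¹ :=
  (one_le_inv₀ (by linarith)).2 (by linarith)

lemma hazardWeight_le (hp₀ : 0 ≤ p₀) (hp₁ : p₀ < 1) (k : ℕ) (ω : Ω) :
    hazardWeight μ ℱ S p₀ k ω ≤ (1 - p₀)⁻¹ ^ k :=
  pow_le_pow_right₀ (one_le_inv_one_sub hp₀ hp₁) (hazardCount_le μ ℱ S p₀ k ω)

end HazardCount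

section Supermartingale

variable {Ω : Type*} {m0 : MeasurableSpace Ω} {μ : Measure Ω} {ℱ : Filtration ℕ m0} {S : Ω → ℕ}
  {p₀ : ℝ}

lemma measurableSet_lt_of_isStoppingTime (hS : IsStoppingTime ℱ (fun ω => (S ω : WithTop ℕ)))
    (k : ℕ) : MeasurableSet[ℱ k] {ω | k < S ω} := by
  simpa using hS.measurableSet_gt k

lemma measurableSet_eq_of_isStoppingTime (hS : IsStoppingTime ℱ (fun ω => (S ω : WithTop ℕ)))
    (k : ℕ) : MeasurableSet[ℱ k] {ω | S ω = k} := by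
  simpa using hS.measurableSet_eq k

lemma stronglyAdapted_weightedSurvival (hS : IsStoppingTime ℱ (fun ω => (S ω : WithTop ℕ))) :
    StronglyAdapted ℱ (weightedSurvival μ ℱ S p₀) := fun k =>
  (measurable_hazardWeight μ ℱ S p₀ (by omega)).stronglyMeasurable.indicator
    (measurableSet_lt_of_isStoppingTime hS k)

lemma integrable_weightedSurvival [IsFiniteMeasure μ]
    (hS : IsStoppingTime ℱ (fun ω => (S ω : WithTop ℕ))) (hp₀ : 0 ≤ p₀) (hp₁ : p₀ < 1) (k : ℕ) :
    Integrable (weightedSurvival μ ℱ S p₀ k) μ := by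
  refine .of_bound ((stronglyAdapted_weightedSurvival hS k).mono (ℱ.le k)).aestronglyMeasurable
    ((1 - p₀)⁻¹ ^ k) (ae_of_all _ fun ω => (norm_indicator_le_norm_self _ ω).trans ?_)
  rw [Real.norm_of_nonneg (hazardWeight_nonneg μ ℱ S hp₁ k ω)]
  exact hazardWeight_le μ ℱ S hp₀ hp₁ k ω

/-- Survival past `k + 1` is survival past `k` minus stopping at `k + 1`, and the weight at
`k + 1` is already `ℱ k`-measurable. -/
lemma condExp_weightedSurvival_succ [IsFiniteMeasure μ]
    (hS : IsStoppingTime ℱ (fun ω => (S ω : WithTop ℕ))) (hp₀ : 0 ≤ p₀) (hp₁ : p₀ < 1) (k : ℕ) :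
    μ[weightedSurvival μ ℱ S p₀ (k + 1) | ℱ k] =ᵐ[μ] hazardWeight μ ℱ S p₀ (k + 1) *
      ({ω | k < S ω}.indicator 1 - condHazard μ ℱ S (k + 1)) := by
  have hlt := measurableSet_lt_of_isStoppingTime hS k
  have heq := measurableSet_eq_of_isStoppingTime hS (k + 1)
  have hsplit : weightedSurvival μ ℱ S p₀ (k + 1) = hazardWeight μ ℱ S p₀ (k + 1) *
      ({ω | k < S ω}.indicator 1 - {ω | S ω = k + 1}.indicator 1) := by
    funext ω
    by_cases h₁ : k + 1 < S ω
    · simp [weightedSurvival, h₁, show k < S ω by omega, show S ω ≠ k + 1 by omega]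
    · by_cases h₂ : S ω = k + 1 <;> simp [weightedSurvival, h₁, h₂]
      omega
  have hint_lt : Integrable ({ω | k < S ω}.indicator (1 : Ω → ℝ)) μ :=
    (integrable_const 1).indicator (ℱ.le k _ hlt)
  have hint_eq : Integrable ({ω | S ω = k + 1}.indicator (1 : Ω → ℝ)) μ :=
    (integrable_const 1).indicator (ℱ.le (k + 1) _ heq)
  rw [hsplit]
  refine (condExp_mul_of_stronglyMeasurable_left
    (measurable_hazardWeight μ ℱ S p₀ le_rfl).stronglyMeasurable
    (hsplit ▸ integrable_weightedSurvival hS hp₀ hp₁ (k + 1)) (hint_lt.sub hint_eq)).trans ?_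
  filter_upwards [condExp_sub hint_lt hint_eq (ℱ k)] with ω hω
  simp only [Pi.mul_apply, hω, Pi.sub_apply,
    condExp_of_stronglyMeasurable (ℱ.le k) (stronglyMeasurable_one.indicator hlt) hint_lt]
  rfl

lemma inv_one_sub_mul_sub_le {p q g : ℝ} (hp : p < 1) (hq : 0 ≤ q) (hg : g = 0 ∨ g = 1) :
    (if p ≤ q then (1 - p)⁻¹ else 1) * (g - q) ≤ g := by
  split_ifs with hpq
  · rcases hg with rfl | rfl
    · exact mul_nonpos_of_nonneg_of_nonpos (inv_nonneg.2 (by linarith)) (by linarith)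
    · rw [inv_mul_le_iff₀ (by linarith)]; linarith
  · linarith

theorem supermartingale_weightedSurvival [IsFiniteMeasure μ]
    (hS : IsStoppingTime ℱ (fun ω => (S ω : WithTop ℕ))) (hp₀ : 0 ≤ p₀) (hp₁ : p₀ < 1) :
    Supermartingale (weightedSurvival μ ℱ S p₀) ℱ μ := by
  refine supermartingale_nat (stronglyAdapted_weightedSurvival hS)
    (integrable_weightedSurvival hS hp₀ hp₁) fun k => ?_
  have hq : 0 ≤ᵐ[μ] condHazard μ ℱ S (k + 1) :=
    condExp_nonneg (ae_of_all _ (Set.indicator_nonneg fun _ _ => zero_le_one))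
  filter_upwards [condExp_weightedSurvival_succ hS hp₀ hp₁ k, hq] with ω hω hqω
  have hg : {ω | k < S ω}.indicator (1 : Ω → ℝ) ω = 0 ∨
      {ω | k < S ω}.indicator (1 : Ω → ℝ) ω = 1 := Set.indicator_eq_zero_or_self _ _ _
  calc μ[weightedSurvival μ ℱ S p₀ (k + 1) | ℱ k] ω
      = hazardWeight μ ℱ S p₀ k ω *
          ((if p₀ ≤ condHazard μ ℱ S (k + 1) ω then (1 - p₀)⁻¹ else 1) *
            ({ω | k < S ω}.indicator 1 ω - condHazard μ ℱ S (k + 1) ω)) := by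
        rw [hω, Pi.mul_apply, hazardWeight_succ, mul_assoc]; rfl
    _ ≤ hazardWeight μ ℱ S p₀ k ω * {ω | k < S ω}.indicator 1 ω :=
        mul_le_mul_of_nonneg_left (inv_one_sub_mul_sub_le hp₁ hqω hg)
          (hazardWeight_nonneg μ ℱ S hp₁ k ω)
    _ = weightedSurvival μ ℱ S p₀ k ω := by
        by_cases h : k < S ω <;> simp [weightedSurvival, h]

lemma integral_weightedSurvival_le [IsFiniteMeasure μ]
    (hS : IsStoppingTime ℱ (fun ω => (S ω : WithTop ℕ))) (hp₀ : 0 ≤ p₀) (hp₁ : p₀ < 1) (n : ℕ) :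
    ∫ ω, weightedSurvival μ ℱ S p₀ n ω ∂μ ≤ μ.real {ω | 0 < S ω} := by
  have hmono := (supermartingale_weightedSurvival (μ := μ) hS hp₀ hp₁).setIntegral_le
    (Nat.zero_le n) MeasurableSet.univ
  have hstart : weightedSurvival μ ℱ S p₀ 0 = {ω | 0 < S ω}.indicator 1 := by
    funext ω
    simp [weightedSurvival, hazardWeight, hazardCount, Set.indicator_apply]
  rw [setIntegral_univ, setIntegral_univ, hstart,
    integral_indicator_one (ℱ.le 0 _ (measurableSet_lt_of_isStoppingTime hS 0))] at hmono
  exact hmono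

/-- Markov's inequality: `weightedSurvival n ≥ (1 - p₀) ^ (-m)` on this event. -/
theorem measureReal_hazardCount_ge_le [IsFiniteMeasure μ]
    (hS : IsStoppingTime ℱ (fun ω => (S ω : WithTop ℕ))) (hp₀ : 0 ≤ p₀) (hp₁ : p₀ < 1)
    (m n : ℕ) :
    μ.real {ω | m ≤ hazardCount μ ℱ S p₀ n ω ∧ n < S ω} ≤ (1 - p₀) ^ m * μ.real {ω | 0 < S ω} := by
  set c := (1 - p₀)⁻¹
  have hc : 0 < c ^ m := pow_pos (inv_pos.2 (by linarith)) m
  have hsub : {ω | m ≤ hazardCount μ ℱ S p₀ n ω ∧ n < S ω} ⊆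
      {ω | c ^ m ≤ weightedSurvival μ ℱ S p₀ n ω} := by
    rintro ω ⟨hm, hn⟩
    rw [Set.mem_ofPred_eq, weightedSurvival,
      Set.indicator_of_mem (show ω ∈ {ω | n < S ω} from hn)]
    exact pow_le_pow_right₀ (one_le_inv_one_sub hp₀ hp₁) hm
  have hmarkov := mul_meas_ge_le_integral_of_nonneg
    (ae_of_all _ fun ω => Set.indicator_nonneg (fun ω _ => hazardWeight_nonneg μ ℱ S hp₁ n ω) ω)
    (integrable_weightedSurvival hS hp₀ hp₁ n) (c ^ m)
  have hpow : (1 - p₀) ^ m = (c ^ m)⁻¹ := by rw [inv_pow, inv_inv]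
  rw [hpow, le_inv_mul_iff₀ hc]
  calc c ^ m * μ.real {ω | m ≤ hazardCount μ ℱ S p₀ n ω ∧ n < S ω}
      ≤ c ^ m * μ.real {ω | c ^ m ≤ weightedSurvival μ ℱ S p₀ n ω} :=
        mul_le_mul_of_nonneg_left (measureReal_mono hsub) hc.le
    _ ≤ μ.real {ω | 0 < S ω} := hmarkov.trans (integral_weightedSurvival_le hS hp₀ hp₁ n)

end Supermartingale

theorem stmt_5_general {Ω : Type*} {m0 : MeasurableSpace Ω} (μ : Measure Ω) [IsProbabilityMeasure μ]
    (ℱ : Filtration ℕ m0) (S : Ω → ℕ) (hS : IsStoppingTime ℱ (fun ω => (S ω : WithTop ℕ)))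
    (p₀ : ℝ) (hp₀ : 0 < p₀) (hp₁ : p₀ < 1) (m n : ℕ) :
    μ {ω | n < S ω} ≤ ENNReal.ofReal ((1 - p₀) ^ m) +
      μ {ω | ((Finset.Icc 1 n).filter (fun i =>
          p₀ ≤ (μ[Set.indicator {ω' | S ω' = i} (fun _ => (1 : ℝ)) | ℱ (i - 1)]) ω)).card < m
        ∧ n < S ω} := by
  have hmany :
      μ {ω | m ≤ hazardCount μ ℱ S p₀ n ω ∧ n < S ω} ≤ ENNReal.ofReal ((1 - p₀) ^ m) := by
    rw [ENNReal.le_ofReal_iff_toReal_le (measure_ne_top _ _) (pow_nonneg (by linarith) m)]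
    exact (measureReal_hazardCount_ge_le hS hp₀.le hp₁ m n).trans
      (mul_le_of_le_one_right (pow_nonneg (by linarith) m) measureReal_le_one)
  have hcover : {ω | n < S ω} ⊆ {ω | m ≤ hazardCount μ ℱ S p₀ n ω ∧ n < S ω} ∪
      {ω | hazardCount μ ℱ S p₀ n ω < m ∧ n < S ω} := fun ω hω => by
    by_cases h : m ≤ hazardCount μ ℱ S p₀ n ω
    exacts [Or.inl ⟨h, hω⟩, Or.inr ⟨not_le.1 h, hω⟩]
  exact (measure_mono hcover).trans ((measure_union_le _ _).trans (add_le_add hmany le_rfl))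

/-- Martingale-type bound: for a stopping time `S ≥ 1`,
`P(S > n) ≤ (1 − p₀)^m + P(L(n,p₀) < m, S > n)` where
`L(n,p₀)(ω) = #{1 ≤ i ≤ n : P(S = i | F_{i−1})(ω) ≥ p₀}`. -/
theorem stmt_5 {Ω : Type*} {m0 : MeasurableSpace Ω} (μ : Measure Ω) [IsProbabilityMeasure μ]
    (ℱ : Filtration ℕ m0) (S : Ω → ℕ) (hS : IsStoppingTime ℱ (fun ω => (S ω : WithTop ℕ)))
    (hS1 : ∀ᵐ ω ∂μ, 1 ≤ S ω) (p₀ : ℝ) (hp₀ : 0 < p₀) (hp₁ : p₀ < 1) (m n : ℕ)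
    (hm : 1 ≤ m) (hn : 1 ≤ n) :
    μ {ω | n < S ω} ≤ ENNReal.ofReal ((1 - p₀) ^ m) +
      μ {ω | ((Finset.Icc 1 n).filter (fun i =>
          p₀ ≤ (μ[Set.indicator {ω' | S ω' = i} (fun _ => (1 : ℝ)) | ℱ (i - 1)]) ω)).card < m
        ∧ n < S ω} :=
  stmt_5_general μ ℱ S hS p₀ hp₀ hp₁ m n
end

section
/- Under the hypotheses of the planted-point lemma: let Ξ be a homogeneous Poisson point process on ℝ² of rate λ, and z₁, z₂ ∈ ℝ² with d = ‖z₂ − z₁‖. Then the probability that the nearest point of Ξ to z₁ equals the nearest point of Ξ to z₂ and that this common point is at distance > r from both z₁ and z₂ is at least exp(−λπ(r + d)²) − P(D₂ − D₁ ≤ 2d), where D₁ ≤ D₂ are the two smallest distances from z₂ to points of Ξ. -/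
/-
On the event that Ξ has no point within `r + d` of `z₁`, and that the second nearest
distance from `z₂` exceeds the first by more than `2d`, the nearest point `p` of `z₂`
is also the unique nearest point of `z₁`: moving the centre by `d` changes every
distance by at most `d`, which cannot close a gap of more than `2d`. Moreover `p` lies
outside the ball of radius `r + d` around `z₁`, hence at distance more than `r` from
both centres. The void probability of that ball is at least `exp (-λπ(r + d)²)`.
-/

open MeasureTheory

/-- A Poisson point process with intensity measure `ν`. -/
def IsPoissonPP {Ω E : Type*} [MeasurableSpace Ω] [MeasurableSpace E]
    (μ : Measure Ω) (Ξ : Ω → Set E) (ν : Measure E) : Prop :=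
  (∀ᵐ ω ∂μ, ∀ A : Set E, MeasurableSet A → ν A < ⊤ → (Ξ ω ∩ A).Finite) ∧
  ∀ (n : ℕ) (A : Fin n → Set E), (∀ i, MeasurableSet (A i)) → (∀ i, ν (A i) < ⊤) →
    Pairwise (Function.onFun Disjoint A) → ∀ k : Fin n → ℕ,
      μ {ω | ∀ i, (Ξ ω ∩ A i).ncard = k i} =
        ∏ i, ENNReal.ofReal (Real.exp (-(ν (A i)).toReal) * (ν (A i)).toReal ^ (k i) /
          (Nat.factorial (k i)))

/-- The distance from `z` to the `k`-th nearest point of the set `Ξ`. -/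
noncomputable def nthDist (z : EuclideanSpace ℝ (Fin 2))
    (Ξ : Set (EuclideanSpace ℝ (Fin 2))) (k : ℕ) : ℝ :=
  sInf {s : ℝ | 0 ≤ s ∧ k ≤ (Ξ ∩ Metric.closedBall z s).ncard}

open Metric

section NearestPoint

variable {X : Type*} [PseudoMetricSpace X]

theorem dist_lt_dist_of_add_two_mul_dist_lt {z₁ z₂ p q : X}
    (h : dist z₂ p + 2 * dist z₂ z₁ < dist z₂ q) : dist z₁ p < dist z₁ q := by
  have := dist_triangle z₁ z₂ p
  have := dist_triangle z₂ z₁ q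
  rw [dist_comm z₁ z₂] at *
  linarith

theorem exists_forall_dist_le_of_finite_inter_closedBall {S : Set X} (z : X)
    (hS : S.Nonempty) (hloc : ∀ R, (S ∩ closedBall z R).Finite) :
    ∃ p ∈ S, ∀ q ∈ S, dist z p ≤ dist z q := by
  obtain ⟨q₀, hq₀⟩ := hS
  have hq₀_mem : q₀ ∈ S ∩ closedBall z (dist z q₀) := ⟨hq₀, mem_closedBall'.2 le_rfl⟩
  obtain ⟨p, ⟨hpS, hp_ball⟩, hp_min⟩ :=
    Set.exists_min_image _ (dist z) (hloc (dist z q₀)) ⟨q₀, hq₀_mem⟩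
  refine ⟨p, hpS, fun q hq => ?_⟩
  by_cases hq_ball : dist z q ≤ dist z q₀
  · exact hp_min q ⟨hq, mem_closedBall'.2 hq_ball⟩
  · exact (mem_closedBall'.1 hp_ball).trans (le_of_not_ge hq_ball)

end NearestPoint

section NthDist

variable {z p q : EuclideanSpace ℝ (Fin 2)} {S : Set (EuclideanSpace ℝ (Fin 2))}

theorem nthDist_empty {k : ℕ} (hk : 0 < k) : nthDist z ∅ k = 0 := by
  have : {s : ℝ | 0 ≤ s ∧ k ≤ ((∅ : Set _) ∩ closedBall z s).ncard} = ∅ := by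
    ext s
    simp only [Set.empty_inter, Set.ncard_empty, Set.mem_ofPred_eq, Set.mem_empty_iff_false,
      iff_false, not_and, nonpos_iff_eq_zero]
    omega
  rw [nthDist, this, Real.sInf_empty]

theorem nthDist_one_eq_dist (hfin : (S ∩ closedBall z (dist z p)).Finite) (hp : p ∈ S)
    (hmin : ∀ q ∈ S, dist z p ≤ dist z q) : nthDist z S 1 = dist z p := by
  refine IsLeast.csInf_eq ⟨⟨dist_nonneg, ?_⟩, fun s ⟨_, hs⟩ => ?_⟩
  · exact (Set.ncard_pos hfin).2 ⟨p, hp, mem_closedBall'.2 le_rfl⟩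
  · obtain ⟨q, hqS, hq⟩ := Set.nonempty_of_ncard_ne_zero (s := S ∩ closedBall z s) (by omega)
    exact (hmin q hqS).trans (mem_closedBall'.1 hq)

theorem nthDist_two_le_dist (hfin : (S ∩ closedBall z (dist z q)).Finite) (hp : p ∈ S)
    (hq : q ∈ S) (hpq : p ≠ q) (hle : dist z p ≤ dist z q) : nthDist z S 2 ≤ dist z q := by
  refine csInf_le ⟨0, fun s hs => hs.1⟩ ⟨dist_nonneg, ?_⟩
  exact (Set.one_lt_ncard hfin).2
    ⟨p, ⟨hp, mem_closedBall'.2 hle⟩, q, ⟨hq, mem_closedBall'.2 le_rfl⟩, hpq⟩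

end NthDist

theorem exists_common_nearest_of_nthDist_gap {z₁ z₂ : EuclideanSpace ℝ (Fin 2)} {r : ℝ}
    {S : Set (EuclideanSpace ℝ (Fin 2))} (hloc : ∀ R, (S ∩ closedBall z₂ R).Finite)
    (hvoid : S ∩ closedBall z₁ (r + dist z₂ z₁) = ∅)
    (hgap : 2 * dist z₂ z₁ < nthDist z₂ S 2 - nthDist z₂ S 1) :
    ∃ p ∈ S, (∀ q ∈ S, q ≠ p → dist z₁ p < dist z₁ q) ∧
      (∀ q ∈ S, q ≠ p → dist z₂ p < dist z₂ q) ∧ r < dist z₁ p ∧ r < dist z₂ p := by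
  have hS : S.Nonempty := by
    refine Set.nonempty_iff_ne_empty.2 fun hS => ?_
    rw [hS, nthDist_empty two_pos, nthDist_empty one_pos] at hgap
    linarith [dist_nonneg (x := z₂) (y := z₁)]
  obtain ⟨p, hpS, hmin⟩ := exists_forall_dist_le_of_finite_inter_closedBall z₂ hS hloc
  have hfar : ∀ q ∈ S, q ≠ p → dist z₂ p + 2 * dist z₂ z₁ < dist z₂ q := by
    intro q hq hqp
    have := nthDist_two_le_dist (hloc _) hpS hq hqp.symm (hmin q hq)
    rw [nthDist_one_eq_dist (hloc _) hpS hmin] at hgap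
    linarith
  have hp_far : r + dist z₂ z₁ < dist z₁ p := by
    by_contra! h
    exact (Set.eq_empty_iff_forall_notMem.1 hvoid) p ⟨hpS, mem_closedBall'.2 h⟩
  refine ⟨p, hpS, fun q hq hqp => dist_lt_dist_of_add_two_mul_dist_lt (hfar q hq hqp),
    fun q hq hqp => by linarith [hfar q hq hqp, dist_nonneg (x := z₂) (y := z₁)], ?_, ?_⟩
  · linarith [dist_nonneg (x := z₂) (y := z₁)]
  · linarith [dist_triangle z₁ z₂ p, dist_comm z₁ z₂]

namespace IsPoissonPP

variable {Ω E : Type*} [MeasurableSpace Ω] [MeasurableSpace E] {μ : Measure Ω}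
  {Ξ : Ω → Set E} {ν : Measure E}

theorem ae_finite_inter (h : IsPoissonPP μ Ξ ν) {A : Set E} (hA : MeasurableSet A)
    (hνA : ν A < ⊤) : ∀ᵐ ω ∂μ, (Ξ ω ∩ A).Finite :=
  h.1.mono fun _ hω => hω A hA hνA

theorem measure_inter_eq_empty (h : IsPoissonPP μ Ξ ν) {A : Set E} (hA : MeasurableSet A)
    (hνA : ν A < ⊤) :
    μ {ω | Ξ ω ∩ A = ∅} = ENNReal.ofReal (Real.exp (-(ν A).toReal)) := by
  have hcount := h.2 1 (fun _ => A) (fun _ => hA) (fun _ => hνA)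
    (fun i j hij => absurd (Subsingleton.elim i j) hij) (fun _ => 0)
  simp only [Fin.forall_fin_one, Fin.prod_univ_one, pow_zero, Nat.factorial_zero,
    Nat.cast_one, mul_one, div_one] at hcount
  rw [← hcount]
  refine measure_congr ((h.ae_finite_inter hA hνA).mono fun ω hfin => ?_)
  exact propext (Set.ncard_eq_zero hfin).symm

end IsPoissonPP

theorem sub_toReal_le_toReal_of_ofReal_le_add {α : Type*} [MeasurableSpace α] {μ : Measure α}
    [IsFiniteMeasure μ] {a : ℝ} {s t : Set α} (h : ENNReal.ofReal a ≤ μ s + μ t) :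
    a - (μ t).toReal ≤ (μ s).toReal := by
  have := ENNReal.toReal_mono (by finiteness) h
  rw [ENNReal.toReal_ofReal', ENNReal.toReal_add (measure_ne_top _ _) (measure_ne_top _ _)] at this
  linarith [le_max_left a 0]

theorem smul_measure_closedBall_lt_top {E : Type*} [PseudoMetricSpace E] [ProperSpace E]
    [MeasurableSpace E] (ν : Measure E) [IsFiniteMeasureOnCompacts ν] (l : ℝ) (z : E) (R : ℝ) :
    (ENNReal.ofReal l • ν) (closedBall z R) < ⊤ :=
  ENNReal.mul_lt_top ENNReal.ofReal_lt_top measure_closedBall_lt_top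

theorem toReal_smul_volume_closedBall_le {l : ℝ} (hl : 0 ≤ l) (z : EuclideanSpace ℝ (Fin 2))
    (R : ℝ) : ((ENNReal.ofReal l • volume) (closedBall z R)).toReal ≤ l * Real.pi * R ^ 2 := by
  rw [Measure.smul_apply, smul_eq_mul, EuclideanSpace.volume_closedBall_fin_two,
    ENNReal.toReal_mul, ENNReal.toReal_mul, ENNReal.toReal_pow, ENNReal.toReal_ofReal hl,
    ENNReal.toReal_ofReal', ENNReal.toReal_ofReal Real.pi_pos.le, mul_comm _ Real.pi,
    ← mul_assoc, ← sq_abs R]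
  gcongr
  exact max_le (le_abs_self R) (abs_nonneg R)

theorem stmt_14_general {Ω : Type*} [MeasurableSpace Ω] (μ : Measure Ω) [IsProbabilityMeasure μ]
    (l : ℝ) (hl : 0 < l) (Ξ : Ω → Set (EuclideanSpace ℝ (Fin 2)))
    (hppp : IsPoissonPP μ Ξ (ENNReal.ofReal l • volume))
    (z₁ z₂ : EuclideanSpace ℝ (Fin 2)) (r : ℝ) :
    Real.exp (-(l * Real.pi * (r + dist z₂ z₁) ^ 2)) -
      (μ {ω | nthDist z₂ (Ξ ω) 2 - nthDist z₂ (Ξ ω) 1 ≤ 2 * dist z₂ z₁}).toReal ≤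
    (μ {ω | ∃ p ∈ Ξ ω,
        (∀ q ∈ Ξ ω, q ≠ p → dist z₁ p < dist z₁ q) ∧
        (∀ q ∈ Ξ ω, q ≠ p → dist z₂ p < dist z₂ q) ∧
        r < dist z₁ p ∧ r < dist z₂ p}).toReal := by
  refine sub_toReal_le_toReal_of_ofReal_le_add ?_
  have hball_lt_top := smul_measure_closedBall_lt_top volume l z₁ (r + dist z₂ z₁)
  calc ENNReal.ofReal (Real.exp (-(l * Real.pi * (r + dist z₂ z₁) ^ 2)))
      ≤ ENNReal.ofReal (Real.exp
          (-((ENNReal.ofReal l • volume) (closedBall z₁ (r + dist z₂ z₁))).toReal)) := by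
        gcongr
        exact toReal_smul_volume_closedBall_le hl.le z₁ _
    _ = μ {ω | Ξ ω ∩ closedBall z₁ (r + dist z₂ z₁) = ∅} :=
        (hppp.measure_inter_eq_empty measurableSet_closedBall hball_lt_top).symm
    _ ≤ μ (_ ∪ _) := measure_mono_ae ?_
    _ ≤ _ := measure_union_le _ _
  filter_upwards [hppp.1] with ω hfin hvoid
  rcases le_or_gt (nthDist z₂ (Ξ ω) 2 - nthDist z₂ (Ξ ω) 1) (2 * dist z₂ z₁) with hgap | hgap
  · exact Or.inr hgap
  · exact Or.inl <| exists_common_nearest_of_nthDist_gap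
      (fun _ => hfin _ measurableSet_closedBall (smul_measure_closedBall_lt_top volume l _ _))
      hvoid hgap

/-- Planted-point lemma: for a rate-`l` homogeneous Poisson process `Ξ` and points
`z₁, z₂` at distance `d`, the probability that the nearest point of `Ξ` to `z₁` equals
the nearest point to `z₂` and lies at distance `> r` from both is at least
`exp(−lπ(r+d)²) − P(D₂ − D₁ ≤ 2d)`, where `D₁ ≤ D₂` are the two nearest distances
from `z₂` to the process. -/
theorem stmt_14 {Ω : Type*} [MeasurableSpace Ω] (μ : Measure Ω) [IsProbabilityMeasure μ]
    (l : ℝ) (hl : 0 < l) (Ξ : Ω → Set (EuclideanSpace ℝ (Fin 2)))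
    (hppp : IsPoissonPP μ Ξ (ENNReal.ofReal l • volume))
    (z₁ z₂ : EuclideanSpace ℝ (Fin 2)) (r : ℝ) (hr : 0 < r) :
    Real.exp (-(l * Real.pi * (r + dist z₂ z₁) ^ 2)) -
      (μ {ω | nthDist z₂ (Ξ ω) 2 - nthDist z₂ (Ξ ω) 1 ≤ 2 * dist z₂ z₁}).toReal ≤
    (μ {ω | ∃ p ∈ Ξ ω,
        (∀ q ∈ Ξ ω, q ≠ p → dist z₁ p < dist z₁ q) ∧
        (∀ q ∈ Ξ ω, q ≠ p → dist z₂ p < dist z₂ q) ∧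
        r < dist z₁ p ∧ r < dist z₂ p}).toReal :=
  stmt_14_general μ l hl Ξ hppp z₁ z₂ r
end
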